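/- arXiv:1510.05877 — 2 statements merged into one kernel-verified Lean document; each statement's English description precedes it below -/
import Mathlib

section
/- Let S be an n-simplex with faces S^i, and let {B^α : α ∈ I} be a family of closed convex subsets of S such that each B^α contains some face S^i. Then ∩_{α∈I} B^α ≠ ∅ if and only if every subfamily of n+1 members of the family that covers the boundary of S also covers S. -/
/-!
If `x` lies in every `B α` and `y ∈ S`, `y ≠ x`, the ray from `x` through `y` leaves `S` at a point
`z` of some facet. A subfamily covering the boundary contains `z` in some member, which then
contains the segment `[x, z] ∋ y` by convexity.

Conversely, by Helly's theorem it suffices that any `n + 1` members meet. Choose for each member a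
facet it contains. If some index `j` labels none of the chosen facets, the vertex `a j` lies in
all of them. Otherwise the members are one per facet, so they cover the boundary and hence, by
hypothesis, all of `S`. Then any `n` of them share the vertex opposite the missing facet and
their union `S` is convex, so all of them meet by Berge's theorem.
-/

open Set

section Facet

variable {ι E : Type*} [Fintype ι] [AddCommGroup E] [Module ℝ E]

theorem exists_weights_of_mem_convexHull_range {a : ι → E} {x : E}
    (hx : x ∈ convexHull ℝ (range a)) :
    ∃ w : ι → ℝ, (∀ j, 0 ≤ w j) ∧ ∑ j, w j = 1 ∧ ∑ j, w j • a j = x := by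
  classical
  rw [convexHull_range_eq_exists_affineCombination] at hx
  obtain ⟨s, w, hw0, hw1, rfl⟩ := hx
  refine ⟨(s : Set ι).indicator w, fun j => indicator_nonneg hw0 j, ?_, ?_⟩
  · rw [Finset.sum_indicator_subset _ s.subset_univ, hw1]
  · rw [s.affineCombination_eq_linear_combination a w hw1,
      ← Finset.sum_indicator_subset (fun j => w j • a j) s.subset_univ]
    exact Finset.sum_congr rfl fun j _ => by by_cases hj : j ∈ s <;> simp [hj]

theorem sum_smul_mem_convexHull_facet {a : ι → E} {w : ι → ℝ} {i : ι} (hw0 : ∀ j, 0 ≤ w j)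
    (hw1 : ∑ j, w j = 1) (hwi : w i = 0) :
    ∑ j, w j • a j ∈ convexHull ℝ (a '' {j | j ≠ i}) := by
  classical
  have hi : ∀ j, j ∈ Finset.univ.erase i ↔ j ≠ i := by simp
  refine mem_convexHull_of_exists_fintype (fun j : {j // j ≠ i} => w j) (fun j => a j)
    (fun j => hw0 j) ?_ (fun j => ⟨j, j.2, rfl⟩) ?_
  · rw [← Finset.sum_subtype _ hi, Finset.sum_erase _ hwi, hw1]
  · rw [← Finset.sum_subtype _ hi (fun j => w j • a j), Finset.sum_erase _ (by simp [hwi])]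

/-- If `l` and `m` are weights of points `x ≠ y`, then `t` is the largest parameter for which the
weights `l + t • (m - l)` of `x + t • (y - x)` stay nonnegative, and `i` is a vertex whose weight
reaches `0` there. -/
theorem exists_ray_exit_weights {l m : ι → ℝ} (hl0 : ∀ j, 0 ≤ l j) (hm0 : ∀ j, 0 ≤ m j)
    (hl1 : ∑ j, l j = 1) (hm1 : ∑ j, m j = 1) (hlm : l ≠ m) :
    ∃ t : ℝ, 1 ≤ t ∧ ∃ i, (∀ j, 0 ≤ l j + t * (m j - l j)) ∧ l i + t * (m i - l i) = 0 := by
  classical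
  obtain ⟨k, hk⟩ : ∃ k, m k < l k := by
    by_contra! h
    exact hlm <| funext fun j =>
      (Finset.sum_eq_sum_iff_of_le fun j _ => h j).1 (hl1.trans hm1.symm) j (Finset.mem_univ j)
  have hT : (Finset.univ.filter (fun j => m j < l j)).Nonempty := ⟨k, by simpa using hk⟩
  obtain ⟨i, hiT, hmin⟩ := Finset.exists_min_image _ (fun j => l j / (l j - m j)) hT
  have hi : m i < l i := (Finset.mem_filter.1 hiT).2
  have hd : 0 < l i - m i := by linarith
  refine ⟨l i / (l i - m i), (one_le_div hd).2 (by linarith [hm0 i]), i, fun j => ?_, ?_⟩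
  · by_cases hj : m j < l j
    · have := hmin j (Finset.mem_filter.2 ⟨Finset.mem_univ j, hj⟩)
      rw [le_div_iff₀ (by linarith)] at this
      nlinarith
    · have : 0 ≤ l i / (l i - m i) := div_nonneg (hl0 i) hd.le
      nlinarith [hl0 j]
  · field_simp
    ring

theorem exists_facet_mem_segment {a : ι → E} {x y : E} (hx : x ∈ convexHull ℝ (range a))
    (hy : y ∈ convexHull ℝ (range a)) (hxy : x ≠ y) :
    ∃ i, ∃ z ∈ convexHull ℝ (a '' {j | j ≠ i}), y ∈ segment ℝ x z := by
  obtain ⟨l, hl0, hl1, rfl⟩ := exists_weights_of_mem_convexHull_range hx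
  obtain ⟨m, hm0, hm1, rfl⟩ := exists_weights_of_mem_convexHull_range hy
  obtain ⟨t, ht, i, hν0, hνi⟩ :=
    exists_ray_exit_weights hl0 hm0 hl1 hm1 (by rintro rfl; exact hxy rfl)
  have ht0 : 0 < t := by linarith
  have hν1 : ∑ j, (l j + t * (m j - l j)) = 1 := by
    rw [Finset.sum_add_distrib, ← Finset.mul_sum, Finset.sum_sub_distrib, hl1, hm1]; ring
  refine ⟨i, _, sum_smul_mem_convexHull_facet hν0 hν1 hνi, 1 - t⁻¹, t⁻¹,
    sub_nonneg.2 (inv_le_one_of_one_le₀ ht), inv_nonneg.2 ht0.le, by ring, ?_⟩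
  simp only [Finset.smul_sum, ← Finset.sum_add_distrib, smul_smul, ← add_smul]
  refine Finset.sum_congr rfl fun j _ => congrArg (· • a j) ?_
  field_simp
  ring

end Facet

section Berge

variable {E : Type*} [AddCommGroup E] [Module ℝ E] [TopologicalSpace E] [IsTopologicalAddGroup E]
  [ContinuousSMul ℝ E]

theorem IsClosed.inter_nonempty_of_convex_union {C D : Set E} (hC : IsClosed C)
    (hD : IsClosed D) (hCD : Convex ℝ (C ∪ D)) (hCne : C.Nonempty) (hDne : D.Nonempty) :
    (C ∩ D).Nonempty := by
  obtain ⟨x, -, hx⟩ := isPreconnected_closed_iff.1 hCD.isPreconnected C D hC hD subset_rfl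
    (by rwa [union_inter_cancel_left]) (by rwa [union_inter_cancel_right])
  exact ⟨x, hx⟩

theorem exists_forall_ne_mem_inter_hyperplane {m : ℕ} {C : Fin (m + 1) → Set E}
    (hconv : ∀ k, Convex ℝ (C k)) (hdrop : ∀ j, ∃ x, ∀ k ≠ j, x ∈ C k) (f : E →L[ℝ] ℝ)
    {c : ℝ} (hf0 : ∀ x ∈ C 0, f x ≤ c) (hfD : ∀ x ∈ ⋂ i, C (Fin.succ i), c ≤ f x) (j : Fin m) :
    ∃ z, ∀ i ≠ j, z ∈ C i.succ ∩ f ⁻¹' {c} := by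
  obtain ⟨x₀, hx₀⟩ := hdrop 0
  obtain ⟨p, hp⟩ := hdrop j.succ
  have hG : Convex ℝ (⋂ i ∈ ({j}ᶜ : Set _), C (Fin.succ i)) :=
    convex_iInter₂ fun i _ => hconv i.succ
  obtain ⟨z, hzG, hzc⟩ := hG.isPreconnected.intermediate_value
    (mem_iInter₂.2 fun i hi => hp i.succ (Fin.succ_injective _ |>.ne hi))
    (mem_iInter₂.2 fun i _ => hx₀ i.succ i.succ_ne_zero) f.continuous.continuousOn
    ⟨hf0 p (hp 0 (Fin.succ_ne_zero j).symm),
      hfD x₀ (mem_iInter.2 fun i => hx₀ i.succ i.succ_ne_zero)⟩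
  exact ⟨z, fun i hi => ⟨mem_iInter₂.1 hzG i hi, hzc⟩⟩

variable [LocallyConvexSpace ℝ E] [T2Space E]

/-- Berge's theorem. In the induction step a hyperplane `f = c` strictly separates `C 0` from
`⋂ i, C i.succ`; its slices by the sets `C i.succ` satisfy the hypotheses again, with one set
fewer, and a common point of the slices would lie in `⋂ i, C i.succ` and on the hyperplane. -/
theorem iInter_nonempty_of_convex_iUnion {m : ℕ} {C : Fin (m + 2) → Set E}
    (hconv : ∀ k, Convex ℝ (C k)) (hcomp : ∀ k, IsCompact (C k))
    (hU : Convex ℝ (⋃ k, C k)) (hdrop : ∀ j, ∃ x, ∀ k ≠ j, x ∈ C k) :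
    (⋂ k, C k).Nonempty := by
  induction m with
  | zero =>
    obtain ⟨p, hp⟩ := hdrop 0
    obtain ⟨q, hq⟩ := hdrop 1
    have hU' : (⋃ k, C k) = C 0 ∪ C 1 := by ext; simp [Fin.exists_fin_two]
    obtain ⟨x, hx⟩ := (hcomp 0).isClosed.inter_nonempty_of_convex_union (hcomp 1).isClosed
      (hU' ▸ hU) ⟨q, hq 0 zero_ne_one⟩ ⟨p, hp 1 one_ne_zero⟩
    exact ⟨x, by simpa [Fin.forall_fin_two] using hx⟩
  | succ m ih =>
    set D := ⋂ i : Fin (m + 2), C i.succ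
    have hmem : ∀ x, x ∈ ⋂ k, C k ↔ x ∈ C 0 ∧ x ∈ D := by
      simp [D, Fin.forall_fin_succ]
    by_contra hempty
    have hdisj : Disjoint (C 0) D := by
      rw [Set.disjoint_left]
      exact fun x h0 hD => hempty ⟨x, (hmem x).2 ⟨h0, hD⟩⟩
    obtain ⟨f, u, c, hfu, huc, hcf⟩ := geometric_hahn_banach_compact_closed (hconv 0) (hcomp 0)
      (convex_iInter fun i : Fin (m + 2) => hconv i.succ)
      (isClosed_iInter fun i : Fin (m + 2) => (hcomp i.succ).isClosed)
      hdisj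
    have hf0 : ∀ x ∈ C 0, f x < c := fun x hx => (hfu x hx).trans huc
    set H := f ⁻¹' {c}
    have hH : Convex ℝ H := (convex_singleton c).linear_preimage f.toLinearMap
    have hUH : (⋃ i : Fin (m + 2), C i.succ ∩ H) = (⋃ k, C k) ∩ H := by
      ext x
      simp only [← iUnion_inter, mem_inter_iff, mem_iUnion, Fin.exists_fin_succ]
      have : x ∈ H → x ∉ C 0 := fun hxH hx0 => (hf0 x hx0).ne hxH
      tauto
    have hdrop' : ∀ j : Fin (m + 2), ∃ x, ∀ i ≠ j, x ∈ C i.succ ∩ H :=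
      exists_forall_ne_mem_inter_hyperplane hconv hdrop f (fun x hx => (hf0 x hx).le)
        fun x hx => (hcf x hx).le
    obtain ⟨w, hw⟩ := ih (C := fun i => C i.succ ∩ H) (fun i => (hconv _).inter hH)
      (fun i => (hcomp _).inter_right (isClosed_eq f.continuous continuous_const))
      (hUH ▸ hU.inter hH) hdrop'
    have hw' := mem_iInter.1 hw
    exact (hcf w (mem_iInter.2 fun i => (hw' i).1)).ne' (hw' 0).2

theorem iInter_nonempty_of_facet_subset {n : ℕ} {a : Fin (n + 1) → E}
    {C : Fin (n + 1) → Set E} (hconv : ∀ k, Convex ℝ (C k)) (hclosed : ∀ k, IsClosed (C k))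
    (hsub : ∀ k, C k ⊆ convexHull ℝ (range a))
    (hfacet : ∀ k, convexHull ℝ (a '' {j | j ≠ k}) ⊆ C k)
    (hcover : convexHull ℝ (range a) ⊆ ⋃ k, C k) : (⋂ k, C k).Nonempty := by
  cases n with
  | zero =>
    obtain ⟨k, hk⟩ := mem_iUnion.1 (hcover (subset_convexHull ℝ _ (mem_range_self 0)))
    exact ⟨a 0, mem_iInter.2 fun k' => by rwa [Subsingleton.elim (α := Fin 1) k' k]⟩
  | succ n =>
    have hU : ⋃ k, C k = convexHull ℝ (range a) := (iUnion_subset hsub).antisymm hcover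
    refine iInter_nonempty_of_convex_iUnion hconv
      (fun k => ((finite_range a).isCompact_convexHull (𝕜 := ℝ)).of_isClosed_subset
        (hclosed k) (hsub k))
      (hU ▸ convex_convexHull ℝ _) fun j => ⟨a j, fun k hk => hfacet k ?_⟩
    exact subset_convexHull ℝ _ ⟨j, hk.symm, rfl⟩

end Berge

theorem Finset.exists_section_of_card_le {ι κ : Type*} [Fintype κ] {I : Finset ι} {f : ι → κ}
    (hf : ∀ k, ∃ α ∈ I, f α = k) (hI : I.card ≤ Fintype.card κ) :
    ∃ g : κ → ι, (∀ k, f (g k) = k) ∧ ∀ α ∈ I, ∃ k, g k = α := by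
  classical
  choose g hgI hfg using hf
  have himage : Finset.univ.image g = I := by
    refine Finset.eq_of_subset_of_card_le (by simpa [Finset.image_subset_iff] using hgI) ?_
    rwa [Finset.card_image_of_injective _ (Function.LeftInverse.injective hfg), Finset.card_univ]
  exact ⟨g, hfg, fun α hα => by simpa [← himage] using hα⟩

theorem stmt_14_general (n : ℕ) (a : Fin (n + 1) → EuclideanSpace ℝ (Fin n))
    (S : Set (EuclideanSpace ℝ (Fin n))) (hS : S = convexHull ℝ (Set.range a))
    (face : Fin (n + 1) → Set (EuclideanSpace ℝ (Fin n)))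
    (hface : ∀ i, face i = convexHull ℝ (a '' {j | j ≠ i}))
    {ι : Type*} (B : ι → Set (EuclideanSpace ℝ (Fin n)))
    (hBclosed : ∀ α, IsClosed (B α)) (hBconv : ∀ α, Convex ℝ (B α))
    (hBS : ∀ α, B α ⊆ S)
    (hBface : ∀ α, ∃ i, face i ⊆ B α) :
    (⋂ α, B α).Nonempty ↔
      ∀ g : Fin (n + 1) → ι, Function.Injective g →
        (⋃ i, face i) ⊆ (⋃ k, B (g k)) → S ⊆ ⋃ k, B (g k) := by
  subst hS
  obtain rfl : face = fun i => convexHull ℝ (a '' {j | j ≠ i}) := funext hface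
  constructor
  · rintro ⟨x, hx⟩ g - hbd y hy
    rw [mem_iInter] at hx
    obtain rfl | hxy := eq_or_ne x y
    · exact mem_iUnion.2 ⟨0, hx _⟩
    obtain ⟨i, z, hz, hyz⟩ := exists_facet_mem_segment (hBS (g 0) (hx _)) hy hxy
    obtain ⟨k, hzk⟩ := mem_iUnion.1 (hbd (mem_iUnion.2 ⟨i, hz⟩))
    exact mem_iUnion.2 ⟨k, (hBconv (g k)).segment_subset (hx _) hzk hyz⟩
  · intro h
    choose i₀ hi₀ using hBface
    have hBcomp : ∀ α, IsCompact (B α) := fun α =>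
      ((finite_range a).isCompact_convexHull (𝕜 := ℝ)).of_isClosed_subset (hBclosed α) (hBS α)
    refine Convex.helly_theorem_compact' hBconv hBcomp fun I hI => ?_
    rw [finrank_euclideanSpace_fin] at hI
    by_cases hsurj : ∀ k, ∃ α ∈ I, i₀ α = k
    · obtain ⟨g, hg, hIg⟩ := I.exists_section_of_card_le hsurj (by simpa using hI)
      have hfacet : ∀ k, convexHull ℝ (a '' {j | j ≠ k}) ⊆ B (g k) := fun k => by
        simpa only [hg k] using hi₀ (g k)
      obtain ⟨x, hx⟩ := iInter_nonempty_of_facet_subset (fun k => hBconv (g k))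
        (fun k => hBclosed (g k)) (fun k => hBS (g k)) hfacet
        (h g (Function.LeftInverse.injective hg) (iUnion_mono hfacet))
      exact ⟨x, mem_iInter₂.2 fun α hα => (hIg α hα).elim fun k hk => hk ▸ mem_iInter.1 hx k⟩
    · obtain ⟨j, hj⟩ := not_forall.1 hsurj
      exact ⟨a j, mem_iInter₂.2 fun α hα =>
        hi₀ α (subset_convexHull ℝ _ ⟨j, fun h => hj ⟨α, hα, h.symm⟩, rfl⟩)⟩

theorem stmt_14 (n : ℕ) (a : Fin (n + 1) → EuclideanSpace ℝ (Fin n))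
    (ha : AffineIndependent ℝ a)
    (S : Set (EuclideanSpace ℝ (Fin n))) (hS : S = convexHull ℝ (Set.range a))
    (face : Fin (n + 1) → Set (EuclideanSpace ℝ (Fin n)))
    (hface : ∀ i, face i = convexHull ℝ (a '' {j | j ≠ i}))
    {ι : Type*} (B : ι → Set (EuclideanSpace ℝ (Fin n)))
    (hBclosed : ∀ α, IsClosed (B α)) (hBconv : ∀ α, Convex ℝ (B α))
    (hBS : ∀ α, B α ⊆ S)
    (hBface : ∀ α, ∃ i, face i ⊆ B α) :
    (⋂ α, B α).Nonempty ↔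
      ∀ g : Fin (n + 1) → ι, Function.Injective g →
        (⋃ i, face i) ⊆ (⋃ k, B (g k)) → S ⊆ ⋃ k, B (g k) :=
  stmt_14_general n a S hS face hface B hBclosed hBconv hBS hBface
end

section
/- Let S be an n-simplex and B^1,...,B^{n+1} closed convex subsets of S whose union contains the boundary of S. If x ∈ ∩_i B^i, then ∪_i B^i = S. -/
/-!
Read in barycentric coordinates, the ray from `x` through a point `v ≠ x` of the simplex leaves
the simplex through a point `y` of some facet. Then `y ∈ B k` for some `k`, and `v` lies on the
segment from `x ∈ B k` to `y`, so `v ∈ B k` by convexity.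
-/

open Set AffineMap

/-- The exit parameter is the least ratio `d i / (d i - c i)` over the coordinates that
decrease. -/
theorem exists_one_le_lineMap_nonneg_and_eq_zero {ι : Type*} [Fintype ι] {c d : ι → ℝ}
    (hc : ∀ i, 0 ≤ c i) (hd : ∀ i, 0 ≤ d i) (hsum : ∑ i, c i = ∑ i, d i) (hcd : c ≠ d) :
    ∃ t : ℝ, 1 ≤ t ∧ ∃ j, (∀ i, 0 ≤ lineMap (d i) (c i) t) ∧ lineMap (d j) (c j) t = 0 := by
  simp only [lineMap_apply_ring']
  set I := Finset.univ.filter fun i => c i < d i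
  have hI : I.Nonempty := by
    by_contra hI
    refine hcd (funext fun i => ?_)
    have hle : ∀ i ∈ Finset.univ, d i ≤ c i := fun i _ => by
      by_contra hlt
      exact hI ⟨i, Finset.mem_filter.mpr ⟨Finset.mem_univ i, not_le.mp hlt⟩⟩
    exact ((Finset.sum_eq_sum_iff_of_le hle).mp hsum.symm i (Finset.mem_univ i)).symm
  obtain ⟨j, hjI, hjmin⟩ := I.exists_min_image (fun i => d i / (d i - c i)) hI
  have hj : 0 < d j - c j := sub_pos.mpr (Finset.mem_filter.mp hjI).2
  have ht : 1 ≤ d j / (d j - c j) := by rw [le_div_iff₀ hj]; linarith [hc j]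
  refine ⟨_, ht, j, fun i => ?_, by field_simp; ring⟩
  by_cases hi : c i < d i
  · have hi' : 0 < d i - c i := sub_pos.mpr hi
    have := hjmin i (Finset.mem_filter.mpr ⟨Finset.mem_univ i, hi⟩)
    rw [le_div_iff₀ hi'] at this
    nlinarith
  · nlinarith [hd i]

namespace AffineBasis

variable {ι E : Type*} [AddCommGroup E] [Module ℝ E] (b : AffineBasis ι ℝ E)

theorem mem_convexHull_iff_forall_coord_nonneg {v : E} :
    v ∈ convexHull ℝ (range b) ↔ ∀ i, 0 ≤ b.coord i v := by
  rw [b.convexHull_eq_nonneg_coord]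
  rfl

theorem mem_convexHull_image_ne_of_coord_eq_zero [Fintype ι] [DecidableEq ι] {y : E}
    (hy : ∀ i, 0 ≤ b.coord i y) {j : ι} (hj : b.coord j y = 0) :
    y ∈ convexHull ℝ (b '' {k | k ≠ j}) := by
  have hsum : ∑ i ∈ Finset.univ.erase j, b.coord i y = 1 := by
    rw [Finset.sum_erase (f := fun i => b.coord i y) _ hj, b.sum_coord_apply_eq_one]
  have hy' : ∑ i ∈ Finset.univ.erase j, b.coord i y • b i = y := by
    rw [Finset.sum_erase (f := fun i => b.coord i y • b i) _ (by simp [hj]), b.linear_combination_coord_eq_self]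
  rw [← hy']
  exact (convex_convexHull ℝ _).sum_mem (fun i _ => hy i) hsum
    fun i hi => subset_convexHull ℝ _ ⟨i, (Finset.mem_erase.mp hi).1, rfl⟩

theorem exists_mem_convexHull_image_ne_and_mem_segment [Fintype ι] [DecidableEq ι] {x v : E}
    (hx : x ∈ convexHull ℝ (range b)) (hv : v ∈ convexHull ℝ (range b)) (hvx : v ≠ x) :
    ∃ j, ∃ y ∈ convexHull ℝ (b '' {k | k ≠ j}), v ∈ segment ℝ x y := by
  rw [mem_convexHull_iff_forall_coord_nonneg] at hx hv
  have hcoord : (fun i => b.coord i v) ≠ fun i => b.coord i x :=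
    fun h => hvx (b.ext_elem (congrFun h))
  obtain ⟨t, ht, j, hnonneg, hzero⟩ := exists_one_le_lineMap_nonneg_and_eq_zero hv hx
    (by rw [b.sum_coord_apply_eq_one, b.sum_coord_apply_eq_one]) hcoord
  simp only [← (b.coord _).apply_lineMap] at hnonneg hzero
  refine ⟨j, lineMap x v t, b.mem_convexHull_image_ne_of_coord_eq_zero hnonneg hzero, ?_⟩
  have ht0 : t ≠ 0 := by positivity
  rw [segment_eq_image_lineMap]
  refine ⟨t⁻¹, ⟨by positivity, inv_le_one_of_one_le₀ ht⟩, ?_⟩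
  rw [lineMap_lineMap_right, inv_mul_cancel₀ ht0, lineMap_apply_one]

end AffineBasis

theorem stmt_16_general (n : ℕ) (a : Fin (n + 1) → EuclideanSpace ℝ (Fin n))
    (ha : AffineIndependent ℝ a)
    (S : Set (EuclideanSpace ℝ (Fin n))) (hS : S = convexHull ℝ (Set.range a))
    (face : Fin (n + 1) → Set (EuclideanSpace ℝ (Fin n)))
    (hface : ∀ i, face i = convexHull ℝ (a '' {j | j ≠ i}))
    (B : Fin (n + 1) → Set (EuclideanSpace ℝ (Fin n)))
    (hBconv : ∀ i, Convex ℝ (B i))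
    (hBS : ∀ i, B i ⊆ S)
    (hbd : (⋃ i, face i) ⊆ ⋃ i, B i)
    (x : EuclideanSpace ℝ (Fin n)) (hx : x ∈ ⋂ i, B i) :
    (⋃ i, B i) = S := by
  have hspan : affineSpan ℝ (range a) = ⊤ := by
    rw [ha.affineSpan_eq_top_iff_card_eq_finrank_add_one]
    simp
  let b : AffineBasis (Fin (n + 1)) ℝ (EuclideanSpace ℝ (Fin n)) := ⟨a, ha, hspan⟩
  have hxB : ∀ k, x ∈ B k := mem_iInter.mp hx
  refine (iUnion_subset hBS).antisymm fun v hv => ?_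
  obtain rfl | hvx := eq_or_ne v x
  · exact mem_iUnion.mpr ⟨0, hxB 0⟩
  subst hS
  obtain ⟨j, y, hy, hvy⟩ :=
    b.exists_mem_convexHull_image_ne_and_mem_segment (hBS 0 (hxB 0)) hv hvx
  obtain ⟨k, hyk⟩ := mem_iUnion.mp (hbd (mem_iUnion.mpr ⟨j, (hface j).symm ▸ hy⟩))
  exact mem_iUnion.mpr ⟨k, (hBconv k).segment_subset (hxB k) hyk hvy⟩

theorem stmt_16 (n : ℕ) (a : Fin (n + 1) → EuclideanSpace ℝ (Fin n))
    (ha : AffineIndependent ℝ a)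
    (S : Set (EuclideanSpace ℝ (Fin n))) (hS : S = convexHull ℝ (Set.range a))
    (face : Fin (n + 1) → Set (EuclideanSpace ℝ (Fin n)))
    (hface : ∀ i, face i = convexHull ℝ (a '' {j | j ≠ i}))
    (B : Fin (n + 1) → Set (EuclideanSpace ℝ (Fin n)))
    (hBclosed : ∀ i, IsClosed (B i)) (hBconv : ∀ i, Convex ℝ (B i))
    (hBS : ∀ i, B i ⊆ S)
    (hbd : (⋃ i, face i) ⊆ ⋃ i, B i)
    (x : EuclideanSpace ℝ (Fin n)) (hx : x ∈ ⋂ i, B i) :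
    (⋃ i, B i) = S :=
  stmt_16_general n a ha S hS face hface B hBconv hBS hbd x hx
end
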